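/- Let n ≥ 2 and let A = {a₁,…,aₘ} with 0 < a₁ < a₂ < … < aₘ be positive integers. Then A has the weak uniqueness property (any two A-tuples of the same length representing the same number in base n are equal) if and only if the shifted set B = {0, a₂−a₁, …, aₘ−a₁} has the uniqueness property (every nonnegative integer has at most one B-expansion with nonzero leading digit). -/

import Mathlib

/-- `l` is an `A`-expansion of `k` in base `n`: all digits in `A`, nonzero leading digit,
and value `k`. The empty list is the expansion of `0`. -/
def IsExpansion (n : ℕ) (A : Finset ℕ) (k : ℕ) (l : List ℕ) : Prop :=
  (∀ d ∈ l, d ∈ A) ∧ l.getLast? ≠ some 0 ∧ Nat.ofDigits n l = k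

/-- Every nonnegative integer has at most one `A`-expansion in base `n`. -/
def UniqueExpansions (n : ℕ) (A : Finset ℕ) : Prop :=
  ∀ k : ℕ, ∀ l₁ l₂ : List ℕ, IsExpansion n A k l₁ → IsExpansion n A k l₂ → l₁ = l₂

/-- The family `f` generates a free semigroup under composition: distinct nonempty
words give distinct composed functions. Composition is left-to-right:
`[u₁,…,u_p] ↦ f u₁ ∘ ⋯ ∘ f u_p`. -/
def FreeComp {α ι : Type*} (f : ι → α → α) : Prop :=
  ∀ w₁ w₂ : List ι, w₁ ≠ [] → w₂ ≠ [] →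
    (w₁.map f).foldr (· ∘ ·) id = (w₂.map f).foldr (· ∘ ·) id → w₁ = w₂


/-!
Subtracting `a₁` from every digit of an `A`-tuple of length `s` lowers the represented number by
`a₁ (1 + n + ⋯ + n^(s-1))`, which depends only on `s`; hence `A` has the weak uniqueness property
iff `B` has it. Since `0 ∈ B`, equal-length `B`-tuples are `B`-expansions padded with leading
zeros, so weak uniqueness for `B` is the same as uniqueness of `B`-expansions.
-/

open List

def WeaklyUniqueExpansions (n : ℕ) (A : Finset ℕ) : Prop :=
  ∀ l₁ l₂ : List ℕ, (∀ d ∈ l₁, d ∈ A) → (∀ d ∈ l₂, d ∈ A) →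
    l₁.length = l₂.length → Nat.ofDigits n l₁ = Nat.ofDigits n l₂ → l₁ = l₂

lemma Nat.ofDigits_map_add_const (b a : ℕ) (l : List ℕ) :
    Nat.ofDigits b (l.map (· + a)) =
      Nat.ofDigits b l + Nat.ofDigits b (replicate l.length a) := by
  induction l with
  | nil => simp
  | cons x l ih =>
    simp only [map_cons, Nat.ofDigits_cons, ih, length_cons, replicate_succ]
    ring

lemma List.exists_eq_map_of_forall_mem_image {α β : Type*} [DecidableEq β] {f : α → β}
    {B : Finset α} {l : List β} (hl : ∀ d ∈ l, d ∈ B.image f) :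
    ∃ m : List α, (∀ d ∈ m, d ∈ B) ∧ l = m.map f := by
  induction l with
  | nil => exact ⟨[], by simp⟩
  | cons x l ih =>
    obtain ⟨hx, hrest⟩ := forall_mem_cons.mp hl
    obtain ⟨b, hb, rfl⟩ := Finset.mem_image.mp hx
    obtain ⟨m, hm, rfl⟩ := ih hrest
    exact ⟨b :: m, forall_mem_cons.mpr ⟨hb, hm⟩, rfl⟩

theorem weaklyUniqueExpansions_image_add_iff (n a : ℕ) (B : Finset ℕ) :
    WeaklyUniqueExpansions n (B.image (· + a)) ↔ WeaklyUniqueExpansions n B := by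
  have map_add_mem : ∀ {m : List ℕ}, (∀ d ∈ m, d ∈ B) →
      ∀ d ∈ m.map (· + a), d ∈ B.image (· + a) := by
    intro m hm d hd
    obtain ⟨b, hb, rfl⟩ := mem_map.mp hd
    exact Finset.mem_image_of_mem _ (hm b hb)
  constructor
  · intro hA m₁ m₂ hm₁ hm₂ hlen hval
    refine map_injective_iff.mpr (add_left_injective a)
      (hA _ _ (map_add_mem hm₁) (map_add_mem hm₂) (by simpa using hlen) ?_)
    rw [Nat.ofDigits_map_add_const, Nat.ofDigits_map_add_const, hval, hlen]
  · intro hB l₁ l₂ hl₁ hl₂ hlen hval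
    obtain ⟨m₁, hm₁, rfl⟩ := exists_eq_map_of_forall_mem_image hl₁
    obtain ⟨m₂, hm₂, rfl⟩ := exists_eq_map_of_forall_mem_image hl₂
    rw [length_map, length_map] at hlen
    rw [Nat.ofDigits_map_add_const, Nat.ofDigits_map_add_const, hlen] at hval
    rw [hB m₁ m₂ hm₁ hm₂ hlen (Nat.add_right_cancel hval)]

lemma List.rtakeWhile_beq_eq_replicate {α : Type*} [BEq α] [LawfulBEq α] (x : α) (l : List α) :
    l.rtakeWhile (· == x) = replicate (l.rtakeWhile (· == x)).length x :=
  eq_replicate_iff.mpr ⟨rfl, fun _ hb => by simpa using mem_rtakeWhile_imp hb⟩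

lemma isExpansion_rdropWhile_beq_zero {n : ℕ} {B : Finset ℕ} {l : List ℕ}
    (hl : ∀ d ∈ l, d ∈ B) :
    IsExpansion n B (Nat.ofDigits n l) (l.rdropWhile (· == 0)) := by
  refine ⟨fun d hd => hl d (rdropWhile_prefix _ _ |>.subset hd), ?_, ?_⟩
  · intro h
    have hne : l.rdropWhile (· == 0) ≠ [] := by simp [← getLast?_eq_none_iff, h]
    have := rdropWhile_last_not (· == 0) l hne
    simp [getLast_eq_iff_getLast?_eq_some, h] at this
  · conv_rhs => rw [← rdropWhile_append_rtakeWhile (p := (· == 0)) (l := l),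
      rtakeWhile_beq_eq_replicate, Nat.ofDigits_append_replicate_zero]

lemma eq_zero_of_getLast?_append_replicate_zero {l : List ℕ} {k : ℕ}
    (h : (l ++ replicate k 0).getLast? ≠ some 0) : k = 0 := by
  cases k with
  | zero => rfl
  | succ k => simp [getLast?_append, replicate_succ'] at h

theorem weaklyUniqueExpansions_iff_uniqueExpansions {n : ℕ} {B : Finset ℕ} (hB : 0 ∈ B) :
    WeaklyUniqueExpansions n B ↔ UniqueExpansions n B := by
  constructor
  · intro hW k l₁ l₂ h₁ h₂
    wlog hle : l₁.length ≤ l₂.length generalizing l₁ l₂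
    · exact (this l₂ l₁ h₂ h₁ (le_of_not_ge hle)).symm
    obtain ⟨d, hd⟩ := Nat.exists_eq_add_of_le hle
    have hpad : l₁ ++ replicate d 0 = l₂ := by
      refine hW _ _ ?_ h₂.1 (by simp [hd]) ?_
      · intro x hx
        rcases mem_append.mp hx with hx | hx
        · exact h₁.1 x hx
        · rwa [eq_of_mem_replicate hx]
      · rw [Nat.ofDigits_append_replicate_zero, h₁.2.2, h₂.2.2]
    have hd0 : d = 0 := eq_zero_of_getLast?_append_replicate_zero (hpad ▸ h₂.2.1)
    simpa [hd0] using hpad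
  · intro hU l₁ l₂ hl₁ hl₂ hlen hval
    have hdrop : l₁.rdropWhile (· == 0) = l₂.rdropWhile (· == 0) :=
      hU _ _ _ (isExpansion_rdropWhile_beq_zero hl₁) (hval ▸ isExpansion_rdropWhile_beq_zero hl₂)
    have htake : l₁.rtakeWhile (· == 0) = l₂.rtakeWhile (· == 0) := by
      rw [rtakeWhile_beq_eq_replicate 0 l₁, rtakeWhile_beq_eq_replicate 0 l₂]
      congr 1
      have h₁ := congrArg length (rdropWhile_append_rtakeWhile (p := (· == 0)) (l := l₁))
      have h₂ := congrArg length (rdropWhile_append_rtakeWhile (p := (· == 0)) (l := l₂))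
      rw [length_append, hdrop] at h₁
      rw [length_append] at h₂
      omega
    rw [← rdropWhile_append_rtakeWhile (p := (· == 0)) (l := l₁),
      ← rdropWhile_append_rtakeWhile (p := (· == 0)) (l := l₂), hdrop, htake]

lemma Finset.image_add_image_sub_eq_self {A : Finset ℕ} {a : ℕ} (h : ∀ x ∈ A, a ≤ x) :
    (A.image (· - a)).image (· + a) = A := by
  rw [Finset.image_image]
  conv_rhs => rw [← Finset.image_id (s := A)]
  exact Finset.image_congr fun x hx => Nat.sub_add_cancel (h x hx)

theorem stmt5_general (n : ℕ) (A : Finset ℕ) (hA : A.Nonempty) :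
    (∀ l₁ l₂ : List ℕ, (∀ d ∈ l₁, d ∈ A) → (∀ d ∈ l₂, d ∈ A) →
        l₁.length = l₂.length → Nat.ofDigits n l₁ = Nat.ofDigits n l₂ → l₁ = l₂) ↔
      UniqueExpansions n (A.image (fun x => x - A.min' hA)) := by
  set a := A.min' hA
  have hB : 0 ∈ A.image (· - a) := Finset.mem_image.mpr ⟨a, A.min'_mem hA, Nat.sub_self a⟩
  calc WeaklyUniqueExpansions n A
      ↔ WeaklyUniqueExpansions n ((A.image (· - a)).image (· + a)) := by
        rw [Finset.image_add_image_sub_eq_self fun x hx => A.min'_le x hx]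
    _ ↔ WeaklyUniqueExpansions n (A.image (· - a)) := weaklyUniqueExpansions_image_add_iff n a _
    _ ↔ UniqueExpansions n (A.image (· - a)) := weaklyUniqueExpansions_iff_uniqueExpansions hB

theorem stmt5 (n : ℕ) (hn : 2 ≤ n) (A : Finset ℕ) (hA : A.Nonempty)
    (hpos : ∀ x ∈ A, 0 < x) :
    (∀ l₁ l₂ : List ℕ, (∀ d ∈ l₁, d ∈ A) → (∀ d ∈ l₂, d ∈ A) →
        l₁.length = l₂.length → Nat.ofDigits n l₁ = Nat.ofDigits n l₂ → l₁ = l₂) ↔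
      UniqueExpansions n (A.image (fun x => x - A.min' hA)) :=
  stmt5_general n A hA
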